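/- Let R be a commutative integral domain. Then the set {X^n : n ∈ ℕ, n ≥ 1} of positive powers of the indeterminate is definable with parameters in the first-order language of rings in the polynomial ring R[X]. -/

import Mathlib

/-!
Since `X` is prime in `R[X]`, a polynomial `z` is a positive power of `X` iff `X ∣ z`,
`X - 1 ∣ z - 1` and every divisor of `z` is a unit or a multiple of `X`. Indeed, the last
condition forces `z = u * X ^ n` with `u` a unit, hence a constant, and `X - 1 ∣ z - 1` says
`z(1) = 1`, i.e. `u = 1`. All three conditions are first-order in the parameter `X`.
-/

/-- A subset `s` of a ring `R` is definable with parameters in the first-order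
language of rings if it is definable over the parameter set `Set.univ` in the
language `FirstOrder.Language.ring`, where `R` is viewed as a structure for that
language via its ring operations. -/
def DefinableInRingLang (R : Type*) [Ring R] (s : Set R) : Prop :=
  letI := FirstOrder.Ring.compatibleRingOfRing R
  Set.Definable₁ (Set.univ : Set R) FirstOrder.Language.ring s

namespace Polynomial

variable {R : Type*} [CommRing R]

theorem X_sub_one_dvd_sub_one_iff {z : R[X]} : X - 1 ∣ z - 1 ↔ z.eval 1 = 1 := by
  rw [← C_1, dvd_iff_isRoot, IsRoot, eval_sub, eval_C, sub_eq_zero]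

theorem exists_eq_mul_X_pow_of_forall_dvd_isUnit_or_X_dvd {z : R[X]} (hz : z ≠ 0)
    (h : ∀ w, w ∣ z → IsUnit w ∨ X ∣ w) : ∃ (u : R[X]) (n : ℕ), IsUnit u ∧ z = u * X ^ n := by
  obtain ⟨q, hzq, hq⟩ := exists_eq_pow_rootMultiplicity_mul_and_not_dvd z hz 0
  rw [C_0, sub_zero] at hzq hq
  exact ⟨q, _, (h q (hzq ▸ dvd_mul_left q _)).resolve_right hq, hzq.trans (mul_comm _ _)⟩

variable [IsDomain R]

theorem isUnit_or_X_dvd_of_dvd_X_pow {w : R[X]} {n : ℕ} (h : w ∣ X ^ n) : IsUnit w ∨ X ∣ w := by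
  obtain ⟨i, -, hi⟩ := (dvd_prime_pow prime_X n).1 h
  rcases i with _ | i
  · exact Or.inl (associated_one_iff_isUnit.1 (by simpa using hi))
  · exact Or.inr ((dvd_pow_self X i.succ_ne_zero).trans hi.symm.dvd)

theorem exists_one_le_eq_X_pow_iff {z : R[X]} :
    (∃ n, 1 ≤ n ∧ z = X ^ n) ↔ X ∣ z ∧ z.eval 1 = 1 ∧ ∀ w, w ∣ z → IsUnit w ∨ X ∣ w := by
  constructor
  · rintro ⟨n, hn, rfl⟩
    exact ⟨dvd_pow_self X (by omega), by simp, fun w hw => isUnit_or_X_dvd_of_dvd_X_pow hw⟩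
  · rintro ⟨hXz, hz1, hdvd⟩
    have hz : z ≠ 0 := by rintro rfl; simp at hz1
    obtain ⟨u, n, hu, rfl⟩ := exists_eq_mul_X_pow_of_forall_dvd_isUnit_or_X_dvd hz hdvd
    obtain ⟨r, -, rfl⟩ := isUnit_iff.1 hu
    obtain rfl : r = 1 := by simpa using hz1
    refine ⟨n, Nat.one_le_iff_ne_zero.2 ?_, by simp⟩
    rintro rfl
    exact not_isUnit_X (isUnit_of_dvd_one (by simpa using hXz))

end Polynomial

open Polynomial in
theorem stmt_8 {R : Type*} [CommRing R] [IsDomain R] :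
    DefinableInRingLang (R[X]) {z : R[X] | ∃ n : ℕ, 1 ≤ n ∧ z = (X : R[X]) ^ n} := by
  open FirstOrder Language in
  let := Ring.compatibleRingOfRing R[X]
  rw [DefinableInRingLang, Set.Definable₁, Set.definable_iff_exists_formula_sum]
  let x {k} : Language.ring.Term (((Set.univ : Set R[X]).Elem ⊕ Fin 1) ⊕ Fin k) :=
    var (.inl (.inl ⟨X, trivial⟩))
  let z {k} : Language.ring.Term (((Set.univ : Set R[X]).Elem ⊕ Fin 1) ⊕ Fin k) :=
    var (.inl (.inr 0))
  refine ⟨∃' (z =' (x * &0)) ⊓ ∃' ((z + -1) =' ((x + -1) * &0)) ⊓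
      ∀' (∃' (z =' (&0 * &1)) ⟹ ∃' ((&0 * &1) =' 1) ⊔ ∃' (&0 =' (x * &1))), ?_⟩
  ext v
  simp [exists_one_le_eq_X_pow_iff, ← X_sub_one_dvd_sub_one_iff, dvd_def, isUnit_iff_exists_inv,
    sub_eq_add_neg, and_assoc, Formula.Realize, x, z, Fin.snoc]
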